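/- Let k ≥ 1 and m = (m_1 ≥ ... ≥ m_k > 0) a partition. For any subset I = {i_1 < ... < i_ℓ} ⊆ {0,...,k-1}, the tuple φ_{i_1} ∘ ... ∘ φ_{i_ℓ}(m) (composition applied with φ_{i_1} last) has all entries ≥ 0 and entrywise ≤ m; moreover its total sum equals |m| - ℓ where |m| = m_1 + ... + m_k. -/

import Mathlib

/-- The operator `φ_ℓ` on a tuple `m : ℕ → ℕ` (with respect to length `k`):
subtract `1` at position `p = min{q : ℓ+1 ≤ q ∧ q ≤ k ∧ m q > m (q+1)}`. -/
noncomputable def phiOp (k ℓ : ℕ) (m : ℕ → ℕ) : ℕ → ℕ :=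
  fun j => if j = sInf {q | ℓ + 1 ≤ q ∧ q ≤ k ∧ m (q + 1) < m q} then m j - 1 else m j

/-- The composition `φ_{i_1} ∘ ⋯ ∘ φ_{i_ℓ}` over a subset `I = {i_1 < ... < i_ℓ}`,
with the smallest index applied last. -/
noncomputable def phiComp (k : ℕ) (I : Finset ℕ) (m : ℕ → ℕ) : ℕ → ℕ :=
  (I.sort (· ≤ ·)).foldr (fun i f => phiOp k i f) m

/-! Each `φ_i` lowers by one the first strict descent of the tuple after position `i`. Such a
descent exists as long as the entry at `i + 1` still exceeds the (zero) entry at `k + 1`. Since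
the indices are applied in decreasing order, `φ_i` only modifies positions beyond `i`, while all
later indices `i' < i` look at positions `i' + 1 ≤ i`, which are still untouched; so each step
finds a descent, keeps the tuple weakly decreasing and lowers the total by exactly one. -/

open Finset

theorem Nat.exists_succ_lt_of_lt {α : Type*} [LinearOrder α] {f : ℕ → α} {a b : ℕ}
    (hab : a ≤ b) (h : f b < f a) : ∃ q, a ≤ q ∧ q < b ∧ f (q + 1) < f q := by
  induction b, hab using Nat.le_induction with
  | base => exact absurd h (lt_irrefl _)
  | succ b hab ih =>
    by_cases hb : f (b + 1) < f b
    · exact ⟨b, hab, b.lt_succ_self, hb⟩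
    · obtain ⟨q, haq, hqb, hq⟩ := ih ((not_lt.mp hb).trans_lt h)
      exact ⟨q, haq, hqb.trans b.lt_succ_self, hq⟩

theorem Antitone.update_sub_one {g : ℕ → ℕ} (hg : Antitone g) {p : ℕ} (hp : g (p + 1) < g p) :
    Antitone (Function.update g p (g p - 1)) := by
  refine antitone_nat_of_succ_le fun q => ?_
  have hq : g (q + 1) ≤ g q := hg q.le_succ
  simp only [Function.update_apply]
  split_ifs <;> subst_vars <;> omega

section phiOp

variable {k ℓ : ℕ} {g : ℕ → ℕ}

noncomputable def phiPos (k ℓ : ℕ) (g : ℕ → ℕ) : ℕ :=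
  sInf {q | ℓ + 1 ≤ q ∧ q ≤ k ∧ g (q + 1) < g q}

theorem phiOp_eq_update (k ℓ : ℕ) (g : ℕ → ℕ) :
    phiOp k ℓ g = Function.update g (phiPos k ℓ g) (g (phiPos k ℓ g) - 1) := by
  funext j
  rw [Function.update_apply]
  unfold phiOp phiPos
  split_ifs with hj
  · rw [hj]
  · rfl

theorem phiOp_le (k ℓ : ℕ) (g : ℕ → ℕ) (j : ℕ) : phiOp k ℓ g j ≤ g j := by
  unfold phiOp
  split_ifs <;> omega

theorem phiPos_spec (hg : Antitone g) (h : g (k + 1) < g (ℓ + 1)) :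
    ℓ + 1 ≤ phiPos k ℓ g ∧ phiPos k ℓ g ≤ k ∧ g (phiPos k ℓ g + 1) < g (phiPos k ℓ g) := by
  have hℓk : ℓ + 1 ≤ k + 1 := (hg.reflect_lt h).le
  obtain ⟨q, hℓq, hqk, hq⟩ := Nat.exists_succ_lt_of_lt hℓk h
  have hne : {q | ℓ + 1 ≤ q ∧ q ≤ k ∧ g (q + 1) < g q}.Nonempty :=
    ⟨q, hℓq, Nat.le_of_lt_succ hqk, hq⟩
  exact Nat.sInf_mem hne

theorem antitone_phiOp (hg : Antitone g) (h : g (k + 1) < g (ℓ + 1)) :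
    Antitone (phiOp k ℓ g) := by
  rw [phiOp_eq_update]
  exact hg.update_sub_one (phiPos_spec hg h).2.2

theorem phiOp_apply_of_notMem_Ioc (hg : Antitone g) (h : g (k + 1) < g (ℓ + 1)) {j : ℕ}
    (hj : j ∉ Set.Ioc ℓ k) : phiOp k ℓ g j = g j := by
  obtain ⟨hℓp, hpk, -⟩ := phiPos_spec hg h
  rw [phiOp_eq_update, Function.update_of_ne]
  rintro rfl
  exact hj ⟨hℓp, hpk⟩

theorem sum_phiOp_add_one (hg : Antitone g) (h : g (k + 1) < g (ℓ + 1)) :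
    ∑ j ∈ Icc 1 k, phiOp k ℓ g j + 1 = ∑ j ∈ Icc 1 k, g j := by
  obtain ⟨hℓp, hpk, hp⟩ := phiPos_spec hg h
  have hmem : phiPos k ℓ g ∈ Icc 1 k := mem_Icc.mpr ⟨by omega, hpk⟩
  rw [phiOp_eq_update, sum_update_of_mem hmem, sdiff_singleton_eq_erase,
    ← add_sum_erase _ _ hmem]
  omega

end phiOp

theorem foldr_phiOp_le (k : ℕ) (m : ℕ → ℕ) (L : List ℕ) (j : ℕ) :
    L.foldr (fun i f => phiOp k i f) m j ≤ m j := by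
  induction L with
  | nil => exact le_rfl
  | cons i L ih => exact (phiOp_le k i _ j).trans ih

theorem foldr_phiOp_spec {k : ℕ} {m : ℕ → ℕ} (hm : Antitone m) :
    ∀ L : List ℕ, L.Pairwise (· < ·) → (∀ i ∈ L, m (k + 1) < m (i + 1)) →
      Antitone (L.foldr (fun i f => phiOp k i f) m) ∧
      (∀ j, (∀ i ∈ L, j ≤ i) ∨ k < j → L.foldr (fun i f => phiOp k i f) m j = m j) ∧
      ∑ j ∈ Icc 1 k, L.foldr (fun i f => phiOp k i f) m j + L.length = ∑ j ∈ Icc 1 k, m j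
  | [], _, _ => ⟨hm, fun _ _ => rfl, rfl⟩
  | i :: L, hsort, hdesc => by
    obtain ⟨hiL, hL⟩ := List.pairwise_cons.mp hsort
    obtain ⟨hanti, heq, hsum⟩ :=
      foldr_phiOp_spec hm L hL fun t ht => hdesc t (List.mem_cons_of_mem i ht)
    set g := L.foldr (fun i f => phiOp k i f) m
    have hgi : g (k + 1) < g (i + 1) := by
      rw [heq (k + 1) (.inr k.lt_succ_self), heq (i + 1) (.inl hiL)]
      exact hdesc i List.mem_cons_self
    refine ⟨antitone_phiOp hanti hgi, fun j hj => ?_, ?_⟩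
    · have hj' : j ∉ Set.Ioc i k := by
        rintro ⟨hij, hjk⟩
        rcases hj with hj | hj
        · exact absurd (hj i List.mem_cons_self) hij.not_ge
        · exact hjk.not_gt hj
      rw [List.foldr_cons, phiOp_apply_of_notMem_Ioc hanti hgi hj']
      refine heq j (hj.imp (fun hj t ht => ?_) id)
      exact (hj i List.mem_cons_self).trans (hiL t ht).le
    · rw [List.foldr_cons, List.length_cons, ← hsum, ← sum_phiOp_add_one hanti hgi]
      ring

theorem phiComp_entries_and_sum_general
    (k : ℕ) (m : ℕ → ℕ)
    (hdec : ∀ q, m (q + 1) ≤ m q)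
    (hpos : ∀ q, 1 ≤ q → q ≤ k → 0 < m q)
    (hsupp : ∀ q, k < q → m q = 0)
    (I : Finset ℕ) (hI : I ⊆ Finset.range k) :
    (∀ j, 0 ≤ phiComp k I m j) ∧
    (∀ j, phiComp k I m j ≤ m j) ∧
    (∑ j ∈ Finset.Icc 1 k, phiComp k I m j = (∑ j ∈ Finset.Icc 1 k, m j) - I.card) := by
  have hdesc : ∀ i ∈ I.sort (· ≤ ·), m (k + 1) < m (i + 1) := fun i hi => by
    have hik : i < k := mem_range.mp (hI ((mem_sort _).mp hi))
    rw [hsupp (k + 1) k.lt_succ_self]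
    exact hpos (i + 1) i.succ_pos hik
  obtain ⟨-, -, hsum⟩ := foldr_phiOp_spec (antitone_nat_of_succ_le hdec) _
    (sortedLT_sort I).pairwise hdesc
  rw [length_sort] at hsum
  exact ⟨fun j => Nat.zero_le _, foldr_phiOp_le k m _, Nat.eq_sub_of_add_eq hsum⟩

/-- For a partition `m = (m_1 ≥ ... ≥ m_k > 0)` and any subset
`I ⊆ {0,...,k-1}` of cardinality `ℓ`, the tuple `φ_{i_1} ∘ ⋯ ∘ φ_{i_ℓ}(m)` has
entries `≥ 0` and entrywise `≤ m`, and its total sum equals `|m| - ℓ`. -/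
theorem phiComp_entries_and_sum
    (k : ℕ) (hk : 1 ≤ k) (m : ℕ → ℕ)
    (hdec : ∀ q, m (q + 1) ≤ m q)
    (hpos : ∀ q, 1 ≤ q → q ≤ k → 0 < m q)
    (hsupp : ∀ q, k < q → m q = 0)
    (I : Finset ℕ) (hI : I ⊆ Finset.range k) :
    (∀ j, 0 ≤ phiComp k I m j) ∧
    (∀ j, phiComp k I m j ≤ m j) ∧
    (∑ j ∈ Finset.Icc 1 k, phiComp k I m j = (∑ j ∈ Finset.Icc 1 k, m j) - I.card) :=
  phiComp_entries_and_sum_general k m hdec hpos hsupp I hI
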